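/- Let V^∨ be the variety in the language {+,*,0,1,∨} defined by the axioms of V_L together with identities stating that ∨ is a semilattice operation with 0∨1 = 0. Then there exists neither a positive first-order formula nor an existential first-order formula Φ(x,y,z,w) such that for all A, B ∈ V^∨, a,c ∈ A and b,d ∈ B: A×B ⊨ Φ(⟨a,b⟩,⟨c,d⟩,(0,1),(1,0)) if and only if a = c. -/

import Mathlib

open FirstOrder Language

universe u v w

namespace Paper

/-- The direct product of two `L`-structures, with pointwise operations. -/
instance prodStructure {L : FirstOrder.Language.{v, w}} (A : Type*) (B : Type*)
    [L.Structure A] [L.Structure B] : L.Structure (A × B) where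
  funMap f x := (Structure.funMap f fun i => (x i).1, Structure.funMap f fun i => (x i).2)
  RelMap r x := Structure.RelMap r (fun i => (x i).1) ∧ Structure.RelMap r fun i => (x i).2

/-- The interpretation of a closed term in an algebra. -/
def interp {L : FirstOrder.Language.{v, w}} (A : Type u) [L.Structure A]
    (t : L.Term Empty) : A := t.realize Empty.elim

/-- Positive formulas: built from atomic formulas using only `∧`, `∨`, `∃`, `∀`. -/
inductive IsPositive {L : FirstOrder.Language.{v, w}} {α : Type*} :
    ∀ {m : ℕ}, L.BoundedFormula α m → Prop
  | equal {m : ℕ} (t₁ t₂ : L.Term (α ⊕ Fin m)) : IsPositive (t₁.bdEqual t₂)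
  | rel {m k : ℕ} (R : L.Relations k) (ts : Fin k → L.Term (α ⊕ Fin m)) :
      IsPositive (BoundedFormula.rel R ts)
  | inf {m : ℕ} {φ ψ : L.BoundedFormula α m} :
      IsPositive φ → IsPositive ψ → IsPositive (φ ⊓ ψ)
  | sup {m : ℕ} {φ ψ : L.BoundedFormula α m} :
      IsPositive φ → IsPositive ψ → IsPositive (φ ⊔ ψ)
  | all {m : ℕ} {φ : L.BoundedFormula α (m + 1)} : IsPositive φ → IsPositive φ.all
  | ex {m : ℕ} {φ : L.BoundedFormula α (m + 1)} : IsPositive φ → IsPositive φ.ex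

/-- Existential formulas: `∃ x̄, ψ` with `ψ` quantifier-free. -/
def IsExistential {L : FirstOrder.Language.{v, w}} {α : Type*} (φ : L.Formula α) : Prop :=
  ∃ (m : ℕ) (ψ : L.BoundedFormula α m), ψ.IsQF ∧ φ = ψ.exs

/-- The function symbols `{+, *, 0, 1, ∨}` of the language of `V^∨`. -/
inductive LJFn : ℕ → Type
  | add : LJFn 2
  | mul : LJFn 2
  | join : LJFn 2
  | zero : LJFn 0
  | one : LJFn 0

/-- The language `{+, *, 0, 1, ∨}`. -/
def LJ : FirstOrder.Language := ⟨LJFn, fun _ => Empty⟩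

/-- The closed term `0`. -/
def zeroT {α : Type*} : LJ.Term α := Term.func LJFn.zero ![]

/-- The closed term `1`. -/
def oneT {α : Type*} : LJ.Term α := Term.func LJFn.one ![]

/-- `t + u`. -/
def addT {α : Type*} (t u : LJ.Term α) : LJ.Term α := Term.func LJFn.add ![t, u]

/-- `t * u`. -/
def mulT {α : Type*} (t u : LJ.Term α) : LJ.Term α := Term.func LJFn.mul ![t, u]

/-- `t ∨ u`. -/
def joinT {α : Type*} (t u : LJ.Term α) : LJ.Term α := Term.func LJFn.join ![t, u]

/-- The first bound variable, as a term. -/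
def xT {n : ℕ} (h : 0 < n) : LJ.Term (Empty ⊕ Fin n) := Term.var (Sum.inr ⟨0, h⟩)

/-- The second bound variable, as a term. -/
def yT {n : ℕ} (h : 1 < n) : LJ.Term (Empty ⊕ Fin n) := Term.var (Sum.inr ⟨1, h⟩)

/-- The third bound variable, as a term. -/
def wT {n : ℕ} (h : 2 < n) : LJ.Term (Empty ⊕ Fin n) := Term.var (Sum.inr ⟨2, h⟩)

/-- The theory of `V^∨`: the axioms `x + 0 = x`, `x + 1 = x * 1`, `x * 0 = 0` of
`V_L`, together with `∨` being a semilattice operation satisfying `0 ∨ 1 = 0`. -/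
def TJ : LJ.Theory :=
  {((addT (xT one_pos) zeroT).bdEqual (xT one_pos)).alls,
   ((addT (xT one_pos) oneT).bdEqual (mulT (xT one_pos) oneT)).alls,
   ((mulT (xT one_pos) zeroT).bdEqual zeroT).alls,
   ((joinT (xT one_pos) (xT one_pos)).bdEqual (xT one_pos)).alls,
   ((joinT (xT (by omega)) (yT (by omega))).bdEqual
      (joinT (yT (by omega : (1:ℕ) < 2)) (xT (by omega)))).alls,
   ((joinT (joinT (xT (by omega)) (yT (by omega))) (wT (by omega))).bdEqual
      (joinT (xT (by omega : (0:ℕ) < 3)) (joinT (yT (by omega)) (wT (by omega))))).alls,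
   ((joinT zeroT oneT).bdEqual (zeroT : LJ.Term (Empty ⊕ Fin 1))).alls}

end Paper

/-!
Take the algebras `A = Fin 2` and `B = Fin 3` below and let `π : A × B → Q` be the quotient
collapsing `{0} × B` to `q₀` and `(1,0), (1,1)` to `q₁`, with `π (1,2) = q₂`. As `(1,0)` and `(1,2)`
have the same `A`-coordinate, `Φ` holds at them in `A × B`. Now `p ↦ (π p, ())` is a surjective
homomorphism `A × B → Q × 1`, which preserves positive formulas, and `p ↦ (π p, p.2)` is an
embedding `A × B → Q × B`, which preserves existential ones. Both maps send `(0,1)` and `(1,0)` to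
the corresponding pairs of constants, so either way `Φ` holds at a pair of elements with first
coordinates `q₁ ≠ q₂`: a contradiction.
-/

namespace Paper

section Preservation

variable {L : FirstOrder.Language} {M N : Type*} [L.Structure M] [L.Structure N] {α : Type*}

theorem IsPositive.realize_comp_of_surjective {n : ℕ} {φ : L.BoundedFormula α n}
    (hφ : IsPositive φ) (f : M →[L] N) (hf : Function.Surjective f) {v : α → M}
    {xs : Fin n → M} : φ.Realize v xs → φ.Realize (f ∘ v) (f ∘ xs) := by
  induction hφ with
  | equal t₁ t₂ =>
    simp only [BoundedFormula.realize_bdEqual, ← Sum.comp_elim, HomClass.realize_term]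
    exact congrArg f
  | rel R ts =>
    simp only [BoundedFormula.Realize, ← Sum.comp_elim, HomClass.realize_term]
    exact f.map_rel R _
  | inf _ _ ih₁ ih₂ =>
    simp only [BoundedFormula.realize_inf]
    exact fun h => ⟨ih₁ h.1, ih₂ h.2⟩
  | sup _ _ ih₁ ih₂ =>
    simp only [BoundedFormula.realize_sup]
    exact fun h => h.imp ih₁ ih₂
  | all _ ih =>
    simp only [BoundedFormula.realize_all]
    refine fun h b => ?_
    obtain ⟨a, rfl⟩ := hf b
    rw [← Fin.comp_snoc]
    exact ih (h a)
  | ex _ ih =>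
    simp only [BoundedFormula.realize_ex]
    refine fun ⟨a, ha⟩ => ⟨f a, ?_⟩
    rw [← Fin.comp_snoc]
    exact ih ha

theorem IsPositive.realize_formula_comp_of_surjective {φ : L.Formula α} (hφ : IsPositive φ)
    (f : M →[L] N) (hf : Function.Surjective f) {v : α → M} (h : φ.Realize v) :
    φ.Realize (f ∘ v) := by
  have := hφ.realize_comp_of_surjective f hf h
  rwa [Subsingleton.elim (f ∘ default) default] at this

theorem _root_.FirstOrder.Language.BoundedFormula.IsExistential.exs {n : ℕ}
    {φ : L.BoundedFormula α n} (hφ : φ.IsExistential) : φ.exs.IsExistential := by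
  induction n with
  | zero => exact hφ
  | succ n ih => exact ih hφ.ex

theorem IsExistential.realize_comp_embedding {φ : L.Formula α} (hφ : IsExistential φ)
    (f : M ↪[L] N) {v : α → M} (h : φ.Realize v) : φ.Realize (f ∘ v) := by
  obtain ⟨m, ψ, hψ, rfl⟩ := hφ
  have := hψ.isExistential.exs.realize_embedding f h
  rwa [Subsingleton.elim (f ∘ default) default] at this

end Preservation

section Decidable

variable {L : FirstOrder.Language} [L.IsAlgebraic] {M : Type*} [L.Structure M] [DecidableEq M]
  [Fintype M] {α : Type*}

def decidableRealize : ∀ {n : ℕ} (φ : L.BoundedFormula α n) (v : α → M) (xs : Fin n → M),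
    Decidable (φ.Realize v xs)
  | _, .falsum, _, _ => isFalse id
  | _, .equal t₁ t₂, v, xs => decEq (t₁.realize (Sum.elim v xs)) (t₂.realize (Sum.elim v xs))
  | _, .rel R _, _, _ => isEmptyElim R
  | _, .imp φ ψ, v, xs =>
    haveI := decidableRealize φ v xs
    haveI := decidableRealize ψ v xs
    inferInstanceAs (Decidable (_ → _))
  | _, .all φ, v, xs =>
    haveI := fun a => decidableRealize φ v (Fin.snoc xs a)
    inferInstanceAs (Decidable (∀ _, _))

instance (φ : L.Sentence) : Decidable (M ⊨ φ) := decidableRealize φ default default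

end Decidable

instance : LJ.IsAlgebraic := fun _ => inferInstanceAs (IsEmpty Empty)

abbrev LJ.mkStructure {M : Type*} (add mul join : M → M → M) (zero one : M) : LJ.Structure M where
  funMap {_} f := match f with
    | .add => fun x => add (x 0) (x 1)
    | .mul => fun x => mul (x 0) (x 1)
    | .join => fun x => join (x 0) (x 1)
    | .zero => fun _ => zero
    | .one => fun _ => one
  RelMap r := isEmptyElim r

open Structure in
def LJ.homOfMapOps {M N : Type*} [LJ.Structure M] [LJ.Structure N] (f : M → N)
    (map_add : ∀ x y, f (funMap (L := LJ) .add ![x, y]) = funMap (L := LJ) .add ![f x, f y])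
    (map_mul : ∀ x y, f (funMap (L := LJ) .mul ![x, y]) = funMap (L := LJ) .mul ![f x, f y])
    (map_join : ∀ x y, f (funMap (L := LJ) .join ![x, y]) = funMap (L := LJ) .join ![f x, f y])
    (map_zero : f (funMap (L := LJ) .zero ![]) = funMap (L := LJ) .zero ![])
    (map_one : f (funMap (L := LJ) .one ![]) = funMap (L := LJ) .one ![]) : M →[LJ] N where
  toFun := f
  map_fun' {_} g x := by
    rw [← FinVec.etaExpand_eq x, ← FinVec.map_eq]
    cases g
    exacts [map_add (x 0) (x 1), map_mul (x 0) (x 1), map_join (x 0) (x 1), map_zero, map_one]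

def dfcAssignment (A B : Type*) [LJ.Structure A] [LJ.Structure B] (p q : A × B) :
    Fin 2 ⊕ (Fin 1 ⊕ Fin 1) → A × B :=
  Sum.elim ![p, q] (Sum.elim (fun _ => (interp A zeroT, interp B oneT))
    fun _ => (interp A oneT, interp B zeroT))

theorem comp_dfcAssignment {A B C D : Type*} [LJ.Structure A] [LJ.Structure B] [LJ.Structure C]
    [LJ.Structure D] (g : A × B → C × D)
    (h₀₁ : g (interp A zeroT, interp B oneT) = (interp C zeroT, interp D oneT))
    (h₁₀ : g (interp A oneT, interp B zeroT) = (interp C oneT, interp D zeroT)) (p q : A × B) :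
    g ∘ dfcAssignment A B p q = dfcAssignment C D (g p) (g q) := by
  funext i
  rcases i with i | _ | _
  · fin_cases i <;> rfl
  · exact h₀₁
  · exact h₁₀

instance : LJ.Structure (Fin 2) :=
  LJ.mkStructure (fun x y => if y = 0 then x else 0) (fun _ _ => 0) min 0 1

instance : LJ.Structure (Fin 3) :=
  LJ.mkStructure (fun x y => if y = 0 ∨ x = 2 then x else 0)
    (fun x y => if x = 2 ∧ y = 1 then 2 else 0)
    (fun x y => if x = y then x else 0) 0 1

inductive Q3 : Type
  | q0 | q1 | q2
  deriving DecidableEq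

instance : Fintype Q3 := ⟨{.q0, .q1, .q2}, fun x => by cases x <;> simp⟩

def Q3.add : Q3 → Q3 → Q3
  | x, .q0 => x
  | _, _ => .q0

def Q3.join : Q3 → Q3 → Q3
  | .q0, _ | _, .q0 => .q0
  | .q1, _ | _, .q1 => .q1
  | .q2, .q2 => .q2

instance : LJ.Structure Q3 := LJ.mkStructure Q3.add (fun _ _ => .q0) Q3.join .q0 .q1

instance : LJ.Structure Unit :=
  LJ.mkStructure (fun _ _ => ()) (fun _ _ => ()) (fun _ _ => ()) () ()

theorem model_TJ_fin_two : Fin 2 ⊨ TJ := by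
  simp only [Theory.model_iff, TJ, Set.forall_mem_insert, Set.mem_singleton_iff, forall_eq]
  decide

theorem model_TJ_fin_three : Fin 3 ⊨ TJ := by
  simp only [Theory.model_iff, TJ, Set.forall_mem_insert, Set.mem_singleton_iff, forall_eq]
  decide

theorem model_TJ_q3 : Q3 ⊨ TJ := by
  simp only [Theory.model_iff, TJ, Set.forall_mem_insert, Set.mem_singleton_iff, forall_eq]
  decide

theorem model_TJ_unit : Unit ⊨ TJ := by
  simp only [Theory.model_iff, TJ, Set.forall_mem_insert, Set.mem_singleton_iff, forall_eq]
  decide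

def collapse (p : Fin 2 × Fin 3) : Q3 := if p.1 = 0 then .q0 else if p.2 = 2 then .q2 else .q1

def collapseProdUnit : Fin 2 × Fin 3 →[LJ] Q3 × Unit :=
  LJ.homOfMapOps (fun p => (collapse p, ())) (by decide) (by decide) (by decide) (by decide)
    (by decide)

theorem collapseProdUnit_surjective : Function.Surjective collapseProdUnit := by decide

def collapseProdSnd : Fin 2 × Fin 3 →[LJ] Q3 × Fin 3 :=
  LJ.homOfMapOps (fun p => (collapse p, p.2)) (by decide) (by decide) (by decide) (by decide)
    (by decide)

theorem collapseProdSnd_injective : Function.Injective collapseProdSnd := by decide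

end Paper

/-- **Proposition 6.3.** In the variety `V^∨` there is neither a positive nor an
existential first-order formula `Φ(x, y, z, w)` such that for all `A, B ∈ V^∨`,
`a, c ∈ A`, `b, d ∈ B` : `A × B ⊨ Φ(⟨a,b⟩, ⟨c,d⟩, (0,1), (1,0))` iff `a = c`. -/
theorem no_positive_or_existential_DFC_witness_for_VJ :
    ¬∃ Φ : Paper.LJ.Formula (Fin 2 ⊕ (Fin 1 ⊕ Fin 1)),
      (Paper.IsPositive Φ ∨ Paper.IsExistential Φ) ∧
      ∀ (A : Type) (B : Type) [Paper.LJ.Structure A] [Paper.LJ.Structure B],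
        A ⊨ Paper.TJ → B ⊨ Paper.TJ → Nonempty A → Nonempty B →
          ∀ (a c : A) (b d : B),
            Φ.Realize (Sum.elim (![((a, b) : A × B), (c, d)])
              (Sum.elim (fun _ => ((Paper.interp A Paper.zeroT, Paper.interp B Paper.oneT) : A × B))
                fun _ => ((Paper.interp A Paper.oneT, Paper.interp B Paper.zeroT) : A × B))) ↔
            a = c := by
  rintro ⟨Φ, hΦ, hdef⟩
  have hsep : Φ.Realize (Paper.dfcAssignment (Fin 2) (Fin 3) (1, 0) (1, 2)) :=
    (hdef _ _ Paper.model_TJ_fin_two Paper.model_TJ_fin_three ⟨0⟩ ⟨0⟩ 1 1 0 2).2 rfl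
  rcases hΦ with hpos | hex
  · have h := hpos.realize_formula_comp_of_surjective _ Paper.collapseProdUnit_surjective hsep
    rw [Paper.comp_dfcAssignment _ (by decide) (by decide)] at h
    exact absurd ((hdef _ _ Paper.model_TJ_q3 Paper.model_TJ_unit ⟨.q0⟩ ⟨()⟩ _ _ _ _).1 h)
      (by decide)
  · have h := hex.realize_comp_embedding (.ofInjective Paper.collapseProdSnd_injective) hsep
    rw [Paper.comp_dfcAssignment _ (by decide) (by decide)] at h
    exact absurd ((hdef _ _ Paper.model_TJ_q3 Paper.model_TJ_fin_three ⟨.q0⟩ ⟨0⟩ _ _ _ _).1 h)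
      (by decide)
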